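/- In the algebra B = B_q(s,t,φ), the relation E²F − (q^{−2s}+q^{−2t})EFE + q^{−2s−2t}FE² = E·φ_{s,t}(K) holds, where φ_{s,t}(λ) = φ(q⁻¹λ) − (q^{−2s}+q^{−2t})φ(qλ) + q^{−2s−2t}φ(q³λ). -/

import Mathlib

open LaurentPolynomial

noncomputable section

/-- The Laurent polynomial `ψ(c·λ)`. -/
noncomputable def lscale {F : Type*} [Field F] (c : F) (ψ : LaurentPolynomial F) :
    LaurentPolynomial F :=
  Finsupp.sum ψ.coeff fun i a => (a * c ^ i) • (T i : LaurentPolynomial F)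

/-- The map `ψ ↦ ψ_{s,t}` of Definition 2.4:
`ψ_{s,t}(λ) = ψ(q⁻¹λ) − (q^{−2s}+q^{−2t})ψ(qλ) + q^{−2s−2t}ψ(q³λ)`. -/
noncomputable def adu {F : Type*} [Field F] (q : F) (s t : ℤ) (ψ : LaurentPolynomial F) :
    LaurentPolynomial F :=
  lscale q⁻¹ ψ - (q ^ (-2*s) + q ^ (-2*t)) • lscale q ψ + q ^ (-2*s-2*t) • lscale (q^3) ψ

/-- `F[λ,λ⁻¹]_{s,t}`: the span of the monomials `λ^i`, `i ∉ {s,t}`. -/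
noncomputable def lstSpan (F : Type*) [Field F] (s t : ℤ) :
    Submodule F (LaurentPolynomial F) :=
  Submodule.span F {ψ : LaurentPolynomial F | ∃ i : ℤ, i ≠ s ∧ i ≠ t ∧ ψ = T i}

/-- `x^i` for `i : ℤ`, interpreting negative powers via a designated inverse `y`. -/
def zpow2 {B : Type*} [Monoid B] (x y : B) (i : ℤ) : B :=
  if 0 ≤ i then x ^ i.toNat else y ^ (-i).toNat

/-- Evaluation `ψ(c·x)` of a Laurent polynomial `ψ`, where `y` plays the role of `x⁻¹`. -/
noncomputable def leval {F : Type*} [Field F] {B : Type*} [Ring B] [Algebra F B]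
    (ψ : LaurentPolynomial F) (c : F) (x y : B) : B :=
  Finsupp.sum ψ.coeff fun i a => (a * c ^ i) • zpow2 x y i

inductive BGen | cs | ct | e | f | k | kinv
deriving DecidableEq

open FreeAlgebra in
/-- Defining relations for `B_q(s,t,φ)`. -/
inductive BRel {F : Type*} [Field F] (q : F) (s t : ℤ) (φ : LaurentPolynomial F) :
    FreeAlgebra F BGen → FreeAlgebra F BGen → Prop
  | csCentral (x) : BRel q s t φ (ι F BGen.cs * x) (x * ι F BGen.cs)
  | ctCentral (x) : BRel q s t φ (ι F BGen.ct * x) (x * ι F BGen.ct)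
  | kkinv : BRel q s t φ (ι F BGen.k * ι F BGen.kinv) 1
  | kinvk : BRel q s t φ (ι F BGen.kinv * ι F BGen.k) 1
  | ke : BRel q s t φ (ι F BGen.k * ι F BGen.e) (q ^ 2 • (ι F BGen.e * ι F BGen.k))
  | kf : BRel q s t φ (ι F BGen.k * ι F BGen.f) ((q ^ 2)⁻¹ • (ι F BGen.f * ι F BGen.k))
  | fe : BRel q s t φ (ι F BGen.f * ι F BGen.e)
      (q ^ s • (ι F BGen.cs * zpow2 (ι F BGen.k) (ι F BGen.kinv) s)
        + q ^ t • (ι F BGen.ct * zpow2 (ι F BGen.k) (ι F BGen.kinv) t)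
        + leval φ q (ι F BGen.k) (ι F BGen.kinv))
  | ef : BRel q s t φ (ι F BGen.e * ι F BGen.f)
      (q ^ (-s) • (ι F BGen.cs * zpow2 (ι F BGen.k) (ι F BGen.kinv) s)
        + q ^ (-t) • (ι F BGen.ct * zpow2 (ι F BGen.k) (ι F BGen.kinv) t)
        + leval φ q⁻¹ (ι F BGen.k) (ι F BGen.kinv))

/-- The algebra `B_q(s,t,φ)`. -/
def BAlg {F : Type*} [Field F] (q : F) (s t : ℤ) (φ : LaurentPolynomial F) : Type _ :=
  RingQuot (BRel q s t φ)

noncomputable instance {F : Type*} [Field F] (q : F) (s t : ℤ) (φ : LaurentPolynomial F) :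
    Ring (BAlg q s t φ) := inferInstanceAs (Ring (RingQuot _))

noncomputable instance {F : Type*} [Field F] (q : F) (s t : ℤ) (φ : LaurentPolynomial F) :
    Algebra F (BAlg q s t φ) := inferInstanceAs (Algebra F (RingQuot _))

/-- The images of the generators in `B_q(s,t,φ)`. -/
noncomputable def bgen {F : Type*} [Field F] (q : F) (s t : ℤ) (φ : LaurentPolynomial F)
    (g : BGen) : BAlg q s t φ :=
  RingQuot.mkAlgHom F (BRel q s t φ) (FreeAlgebra.ι F g)

/-! Because `K E = q² E K`, each `K^i`, hence each `ψ(cK)`, moves past `E` at the cost of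
replacing `c` by `q²c`, while `C_s, C_t` are central. So `E²F`, `EFE` and `FE²` are `E` times
combinations of `C_s K^s`, `C_t K^t` and `φ(q⁻¹K), φ(qK), φ(q³K)`, and in the given combination
the coefficient of `C_s K^s` is `q^{-s} - (q^{-2s} + q^{-2t}) q^s + q^{-2s-2t} q^{3s} = 0`
(symmetrically for `t`). -/

section Evaluation

variable {F : Type*} [Field F]

theorem zpow2_units {M : Type*} [Monoid M] (u : Mˣ) (i : ℤ) :
    zpow2 (u : M) ↑u⁻¹ i = ↑(u ^ i) := by
  unfold zpow2
  split_ifs with hi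
  · rw [← Units.val_pow_eq_pow_val, ← zpow_natCast, Int.toNat_of_nonneg hi]
  · rw [← Units.val_pow_eq_pow_val, ← zpow_natCast, inv_zpow', Int.toNat_of_nonneg (by omega),
      neg_neg]

theorem map_zpow2 {M N G : Type*} [Monoid M] [Monoid N] [FunLike G M N] [MonoidHomClass G M N]
    (g : G) (x y : M) (i : ℤ) : g (zpow2 x y i) = zpow2 (g x) (g y) i := by
  unfold zpow2
  split_ifs <;> simp

variable {B : Type*} [Ring B] [Algebra F B]

theorem leval_eq_linearCombination (ψ : LaurentPolynomial F) (c : F) (x y : B) :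
    leval ψ c x y = Finsupp.linearCombination F (fun i => c ^ i • zpow2 x y i) ψ.coeff := by
  rw [_root_.leval, Finsupp.linearCombination_apply]
  exact Finsupp.sum_congr fun i _ => mul_smul _ _ _

theorem map_leval {C : Type*} [Ring C] [Algebra F C] (g : B →ₐ[F] C)
    (ψ : LaurentPolynomial F) (c : F) (x y : B) :
    g (leval ψ c x y) = leval ψ c (g x) (g y) := by
  simp only [_root_.leval, map_finsuppSum, map_smul, map_zpow2]

theorem leval_add (ψ₁ ψ₂ : LaurentPolynomial F) (c : F) (x y : B) :
    leval (ψ₁ + ψ₂) c x y = leval ψ₁ c x y + leval ψ₂ c x y := by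
  simp only [leval_eq_linearCombination, AddMonoidAlgebra.coeff_add, map_add]

theorem leval_sub (ψ₁ ψ₂ : LaurentPolynomial F) (c : F) (x y : B) :
    leval (ψ₁ - ψ₂) c x y = leval ψ₁ c x y - leval ψ₂ c x y := by
  simp only [leval_eq_linearCombination, AddMonoidAlgebra.coeff_sub, map_sub]

theorem leval_smul (b : F) (ψ : LaurentPolynomial F) (c : F) (x y : B) :
    leval (b • ψ) c x y = b • leval ψ c x y := by
  simp only [leval_eq_linearCombination, AddMonoidAlgebra.coeff_smul, map_smul]

theorem leval_C_mul_T (a : F) (i : ℤ) (c : F) (x y : B) :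
    leval (C a * T i) c x y = (a * c ^ i) • zpow2 x y i := by
  rw [← single_eq_C_mul_T, _root_.leval, AddMonoidAlgebra.coeff_single]
  exact Finsupp.sum_single_index (by rw [zero_mul, zero_smul])

theorem lscale_add (c : F) (ψ₁ ψ₂ : LaurentPolynomial F) :
    lscale c (ψ₁ + ψ₂) = lscale c ψ₁ + lscale c ψ₂ :=
  Finsupp.sum_add_index' (fun _ => by rw [zero_mul, zero_smul])
    fun _ _ _ => by rw [add_mul, add_smul]

theorem lscale_C_mul_T (c a : F) (i : ℤ) :
    lscale c (C a * T i) = C (a * c ^ i) * T i := by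
  rw [lscale, ← single_eq_C_mul_T, AddMonoidAlgebra.coeff_single,
    Finsupp.sum_single_index (by rw [zero_mul, zero_smul]), smul_eq_C_mul]

theorem leval_lscale_one (c : F) (ψ : LaurentPolynomial F) (x y : B) :
    leval (lscale c ψ) 1 x y = leval ψ c x y := by
  induction ψ using LaurentPolynomial.induction_on' with
  | add ψ₁ ψ₂ h₁ h₂ => rw [lscale_add, leval_add, leval_add, h₁, h₂]
  | C_mul_T i a => rw [lscale_C_mul_T, leval_C_mul_T, leval_C_mul_T, one_zpow, mul_one]

theorem leval_adu_one (q : F) (s t : ℤ) (ψ : LaurentPolynomial F) (x y : B) :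
    leval (adu q s t ψ) 1 x y
      = leval ψ q⁻¹ x y - (q ^ (-2*s) + q ^ (-2*t)) • leval ψ q x y
          + q ^ (-2*s-2*t) • leval ψ (q ^ 3) x y := by
  simp only [adu, leval_add, leval_sub, leval_smul, leval_lscale_one]

end Evaluation

section Commutation

variable {F B : Type*} [Field F] [Ring B] [Algebra F B]

theorem units_inv_mul_eq_smul {u : Bˣ} {e : B} {r : F} (h : ↑u * e = r • (e * ↑u))
    (hr : r ≠ 0) : ↑u⁻¹ * e = r⁻¹ • (e * ↑u⁻¹) := by
  have h' : e * ↑u = r⁻¹ • (↑u * e) := by rw [h, smul_smul, inv_mul_cancel₀ hr, one_smul]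
  calc ↑u⁻¹ * e = ↑u⁻¹ * (e * ↑u) * ↑u⁻¹ := by
        rw [mul_assoc, mul_assoc, Units.mul_inv, mul_one]
    _ = r⁻¹ • (e * ↑u⁻¹) := by
      rw [h', mul_smul_comm, smul_mul_assoc, ← mul_assoc, Units.inv_mul, one_mul]

theorem units_zpow_mul_eq_smul {u : Bˣ} {e : B} {r : F} (h : ↑u * e = r • (e * ↑u))
    (hr : r ≠ 0) (i : ℤ) : ↑(u ^ i) * e = r ^ i • (e * ↑(u ^ i)) := by
  have step : ∀ (v : Bˣ) (ρ : F) (j : ℤ), ↑v * e = ρ • (e * ↑v) →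
      ↑(u ^ j) * e = r ^ j • (e * ↑(u ^ j)) →
      ↑(u ^ j * v) * e = (r ^ j * ρ) • (e * ↑(u ^ j * v)) := by
    intro v ρ j hv hj
    rw [Units.val_mul, mul_assoc, hv, mul_smul_comm, ← mul_assoc, hj, smul_mul_assoc, smul_smul,
      mul_comm ρ, mul_assoc]
  induction i using Int.induction_on with
  | zero => simp
  | succ j ih => rw [zpow_add_one, zpow_add_one₀ hr]; exact step u r j h ih
  | pred j ih =>
    rw [zpow_sub_one, zpow_sub_one₀ hr]
    exact step u⁻¹ r⁻¹ (-j) (units_inv_mul_eq_smul h hr) ih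

theorem leval_units_mul {u : Bˣ} {e : B} {r : F} (h : ↑u * e = r • (e * ↑u))
    (hr : r ≠ 0) (ψ : LaurentPolynomial F) (c : F) :
    leval ψ c ↑u ↑u⁻¹ * e = e * leval ψ (c * r) ↑u ↑u⁻¹ := by
  simp only [_root_.leval, Finsupp.sum_mul, Finsupp.mul_sum, smul_mul_assoc, mul_smul_comm,
    zpow2_units, units_zpow_mul_eq_smul h hr, smul_smul, mul_zpow, mul_assoc]

end Commutation

section SerreRelation

variable {F B : Type*} [Field F] [Ring B] [Algebra F B]

theorem serre_relation {q : F} (hq : q ≠ 0) (s t : ℤ) (φ : LaurentPolynomial F) {u : Bˣ}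
    {e f cs ct : B} (hcs : Commute cs e) (hct : Commute ct e)
    (hue : ↑u * e = q ^ 2 • (e * ↑u))
    (hfe : f * e = q ^ s • (cs * ↑(u ^ s)) + q ^ t • (ct * ↑(u ^ t)) + leval φ q ↑u ↑u⁻¹)
    (hef : e * f = q ^ (-s) • (cs * ↑(u ^ s)) + q ^ (-t) • (ct * ↑(u ^ t))
      + leval φ q⁻¹ ↑u ↑u⁻¹) :
    e * e * f - (q ^ (-2*s) + q ^ (-2*t)) • (e * f * e) + q ^ (-2*s-2*t) • (f * (e * e))
      = e * leval (adu q s t φ) 1 ↑u ↑u⁻¹ := by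
  have hq2 : q ^ 2 ≠ 0 := pow_ne_zero 2 hq
  have hZ : ∀ {c : B}, Commute c e → ∀ i : ℤ,
      c * ↑(u ^ i) * e = q ^ (2 * i) • (e * (c * ↑(u ^ i))) := by
    intro c hc i
    rw [mul_assoc, units_zpow_mul_eq_smul hue hq2, mul_smul_comm, ← mul_assoc, hc.eq,
      mul_assoc, zpow_mul]
    norm_cast
  have hP : ∀ c : F, leval φ c ↑u ↑u⁻¹ * e = e * leval φ (c * q ^ 2) ↑u ↑u⁻¹ :=
    leval_units_mul hue hq2 φ
  have hEEF : e * e * f = q ^ (-s) • (e * (cs * ↑(u ^ s)))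
      + q ^ (-t) • (e * (ct * ↑(u ^ t))) + e * leval φ q⁻¹ ↑u ↑u⁻¹ := by
    rw [mul_assoc, hef, mul_add, mul_add, mul_smul_comm, mul_smul_comm]
  have hEFE : e * f * e = (q ^ (-s) * q ^ (2 * s)) • (e * (cs * ↑(u ^ s)))
      + (q ^ (-t) * q ^ (2 * t)) • (e * (ct * ↑(u ^ t))) + e * leval φ q ↑u ↑u⁻¹ := by
    rw [hef, add_mul, add_mul, smul_mul_assoc, smul_mul_assoc, hZ hcs, hZ hct, hP, smul_smul,
      smul_smul, inv_mul_eq_div, pow_two, mul_div_cancel_left₀ _ hq]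
  have hFEE : f * (e * e) = (q ^ s * q ^ (2 * s)) • (e * (cs * ↑(u ^ s)))
      + (q ^ t * q ^ (2 * t)) • (e * (ct * ↑(u ^ t))) + e * leval φ (q ^ 3) ↑u ↑u⁻¹ := by
    rw [← mul_assoc, hfe, add_mul, add_mul, smul_mul_assoc, smul_mul_assoc, hZ hcs, hZ hct, hP,
      smul_smul, smul_smul, ← pow_succ']
  rw [hEEF, hEFE, hFEE, leval_adu_one, mul_add, mul_sub, mul_smul_comm, mul_smul_comm]
  match_scalars <;> simp only [mul_one, add_mul, ← zpow_add₀ hq] <;> ring_nf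

end SerreRelation

section Relations

variable {F : Type*} [Field F] (q : F) (s t : ℤ) (φ : LaurentPolynomial F)

theorem bgen_k_mul_kinv : bgen q s t φ .k * bgen q s t φ .kinv = 1 := by
  have h := RingQuot.mkAlgHom_rel F (BRel.kkinv : BRel q s t φ _ _)
  simp only [map_mul, map_one] at h
  exact h

theorem bgen_kinv_mul_k : bgen q s t φ .kinv * bgen q s t φ .k = 1 := by
  have h := RingQuot.mkAlgHom_rel F (BRel.kinvk : BRel q s t φ _ _)
  simp only [map_mul, map_one] at h
  exact h

def bgenUnitK : (BAlg q s t φ)ˣ :=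
  ⟨bgen q s t φ .k, bgen q s t φ .kinv, bgen_k_mul_kinv q s t φ, bgen_kinv_mul_k q s t φ⟩

theorem bgenUnitK_mul_e :
    ↑(bgenUnitK q s t φ) * bgen q s t φ .e
      = q ^ 2 • (bgen q s t φ .e * ↑(bgenUnitK q s t φ)) := by
  have h := RingQuot.mkAlgHom_rel F (BRel.ke : BRel q s t φ _ _)
  simp only [map_mul, map_smul] at h
  exact h

theorem commute_bgen_cs_e : Commute (bgen q s t φ .cs) (bgen q s t φ .e) := by
  have h := RingQuot.mkAlgHom_rel F
    (BRel.csCentral (FreeAlgebra.ι F .e) : BRel q s t φ _ _)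
  simp only [map_mul] at h
  exact h

theorem commute_bgen_ct_e : Commute (bgen q s t φ .ct) (bgen q s t φ .e) := by
  have h := RingQuot.mkAlgHom_rel F
    (BRel.ctCentral (FreeAlgebra.ι F .e) : BRel q s t φ _ _)
  simp only [map_mul] at h
  exact h

theorem bgen_f_mul_e :
    bgen q s t φ .f * bgen q s t φ .e
      = q ^ s • (bgen q s t φ .cs * ↑(bgenUnitK q s t φ ^ s))
        + q ^ t • (bgen q s t φ .ct * ↑(bgenUnitK q s t φ ^ t))
        + leval φ q ↑(bgenUnitK q s t φ) ↑(bgenUnitK q s t φ)⁻¹ := by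
  simp only [← zpow2_units]
  have h := RingQuot.mkAlgHom_rel F (BRel.fe : BRel q s t φ _ _)
  simp only [map_add, map_mul, map_smul, map_zpow2, map_leval] at h
  exact h

theorem bgen_e_mul_f :
    bgen q s t φ .e * bgen q s t φ .f
      = q ^ (-s) • (bgen q s t φ .cs * ↑(bgenUnitK q s t φ ^ s))
        + q ^ (-t) • (bgen q s t φ .ct * ↑(bgenUnitK q s t φ ^ t))
        + leval φ q⁻¹ ↑(bgenUnitK q s t φ) ↑(bgenUnitK q s t φ)⁻¹ := by
  simp only [← zpow2_units]
  have h := RingQuot.mkAlgHom_rel F (BRel.ef : BRel q s t φ _ _)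
  simp only [map_add, map_mul, map_smul, map_zpow2, map_leval] at h
  exact h

end Relations

theorem stmt10_general {F : Type*} [Field F] (q : F) (hq0 : q ≠ 0)
    (s t : ℤ)
    (φ : LaurentPolynomial F) :
    bgen q s t φ BGen.e * bgen q s t φ BGen.e * bgen q s t φ BGen.f
        - (q ^ (-2*s) + q ^ (-2*t)) •
            (bgen q s t φ BGen.e * bgen q s t φ BGen.f * bgen q s t φ BGen.e)
        + q ^ (-2*s-2*t) •
            (bgen q s t φ BGen.f * (bgen q s t φ BGen.e * bgen q s t φ BGen.e))
      = bgen q s t φ BGen.e *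
          leval (adu q s t φ) 1 (bgen q s t φ BGen.k) (bgen q s t φ BGen.kinv) :=
  serre_relation hq0 s t φ (commute_bgen_cs_e q s t φ) (commute_bgen_ct_e q s t φ)
    (bgenUnitK_mul_e q s t φ) (bgen_f_mul_e q s t φ) (bgen_e_mul_f q s t φ)

theorem stmt10 {F : Type*} [Field F] (q : F) (hq0 : q ≠ 0)
    (hq : ∀ n : ℕ, 0 < n → q ^ n ≠ 1) (s t : ℤ) (hst : s ≠ t)
    (φ : LaurentPolynomial F) (hφ : φ.coeff s = 0 ∧ φ.coeff t = 0) :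
    bgen q s t φ BGen.e * bgen q s t φ BGen.e * bgen q s t φ BGen.f
        - (q ^ (-2*s) + q ^ (-2*t)) •
            (bgen q s t φ BGen.e * bgen q s t φ BGen.f * bgen q s t φ BGen.e)
        + q ^ (-2*s-2*t) •
            (bgen q s t φ BGen.f * (bgen q s t φ BGen.e * bgen q s t φ BGen.e))
      = bgen q s t φ BGen.e *
          leval (adu q s t φ) 1 (bgen q s t φ BGen.k) (bgen q s t φ BGen.kinv) :=
  stmt10_general q hq0 s t φ

end
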